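/- There exists an absolute constant C > 0 such that for every T ≥ 1, every η with 0 < η ≤ 1/3, every A ∈ SL(2,ℝ) with ‖A − I‖∞ ≤ 1, and every u ∈ [0, T^η], one has ‖ω(u)^{-1}·A·ω(u) − n(u)·A·n(-u)‖∞ ≤ C·T^{-1+3η}. -/
import Mathlib


open Real Matrix

/-- `n t = [[1, t], [0, 1]]`. -/
noncomputable def n (t : ℝ) : Matrix (Fin 2) (Fin 2) ℝ := !![1, t; 0, 1]

/-- The maximum of the absolute values of the entries of a real 2×2 matrix. -/
noncomputable def mnorm (M : Matrix (Fin 2) (Fin 2) ℝ) : ℝ :=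
  max (max |M 0 0| |M 0 1|) (max |M 1 0| |M 1 1|)

/-- `ω T u = [[(1+u/T)^{1/2}, -u(1+u/T)^{-1/2}], [0, (1+u/T)^{-1/2}]]`. -/
noncomputable def ω (T u : ℝ) : Matrix (Fin 2) (Fin 2) ℝ :=
  !![(1 + u / T) ^ ((1 : ℝ) / 2), -u * (1 + u / T) ^ (-(1 : ℝ) / 2);
     0, (1 + u / T) ^ (-(1 : ℝ) / 2)]

lemma mnorm_fin (p q v w : ℝ) :
    mnorm !![p, q; v, w] = max (max |p| |q|) (max |v| |w|) := rfl

set_option maxHeartbeats 1000000 in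
theorem stmt4 :
    ∃ C > (0 : ℝ), ∀ T : ℝ, 1 ≤ T → ∀ η : ℝ, 0 < η → η ≤ 1 / 3 →
      ∀ A : Matrix (Fin 2) (Fin 2) ℝ, A.det = 1 → mnorm (A - 1) ≤ 1 →
        ∀ u : ℝ, 0 ≤ u → u ≤ T ^ η →
          mnorm ((ω T u)⁻¹ * A * ω T u - n u * A * n (-u)) ≤ C * T ^ (-1 + 3 * η) := by
  refine ⟨7, by norm_num, ?_⟩
  intro T hT η hη hη3 A hdet hA1 u hu huT
  have hT0 : (0:ℝ) < T := lt_of_lt_of_le one_pos hT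
  set r : ℝ := 1 + u / T with hrdef
  have hr1 : (1:ℝ) ≤ r := le_add_of_nonneg_right (div_nonneg hu hT0.le)
  have hr0 : (0:ℝ) < r := lt_of_lt_of_le one_pos hr1
  set s : ℝ := r ^ ((1:ℝ)/2) with hs
  set t : ℝ := r ^ (-(1:ℝ)/2) with ht
  have hst : s * t = 1 := by
    rw [hs, ht, ← Real.rpow_add hr0]; norm_num
  have hss : s * s = r := by
    rw [hs, ← Real.rpow_add hr0]; norm_num
  have htt : t * t = r⁻¹ := by
    rw [ht, ← Real.rpow_add hr0,
      show (-(1:ℝ)/2 + -(1:ℝ)/2) = -1 by norm_num, Real.rpow_neg_one]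
  have hω : ω T u = !![s, -u*t; 0, t] := rfl
  have hinv : (ω T u)⁻¹ = !![t, u*t; 0, s] := by
    apply Matrix.inv_eq_left_inv
    rw [hω]
    ext i j
    fin_cases i <;> fin_cases j <;>
      simp [Matrix.mul_apply, Fin.sum_univ_two, Matrix.one_apply]
    · linear_combination hst
    · ring
    · linear_combination hst
  set a := A 0 0 with hA00
  set b := A 0 1 with hA01
  set c := A 1 0 with hA10
  set d := A 1 1 with hA11
  set X : ℝ := b + u*d - u*a - u^2*c with hX
  have hA : A = !![a, b; c, d] := by
    ext i j; fin_cases i <;> fin_cases j <;> rfl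
  have hD : (ω T u)⁻¹ * A * ω T u - n u * A * n (-u)
      = !![0, (t*t - 1) * X; (s*s - 1) * c, 0] := by
    rw [hinv, hω, hA, n, n, Matrix.mul_fin_two, Matrix.mul_fin_two,
      Matrix.mul_fin_two, Matrix.mul_fin_two]
    ext i j
    fin_cases i <;> fin_cases j <;> simp [Matrix.sub_apply, hX]
    · linear_combination (a + u*c) * hst
    · ring
    · ring
    · linear_combination (d - u*c) * hst
  -- entry bounds on A
  have hsub : A - 1 = !![a - 1, b; c, d - 1] := by
    rw [hA, Matrix.one_fin_two]
    ext i j; fin_cases i <;> fin_cases j <;> simp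
  rw [hsub, mnorm_fin] at hA1
  simp only [max_le_iff] at hA1
  obtain ⟨⟨ha1, hb1⟩, hc1, hd1⟩ := hA1
  have ha := abs_le.mp ha1
  have hb := abs_le.mp hb1
  have hc := abs_le.mp hc1
  have hd := abs_le.mp hd1
  -- power estimates
  have hP1 : (1:ℝ) ≤ T ^ η := by
    simpa using Real.rpow_le_rpow_of_exponent_le hT hη.le
  have hcube : (T ^ η) ^ 3 = T ^ (3 * η) := by
    rw [← Real.rpow_natCast (T ^ η) 3, ← Real.rpow_mul hT0.le]
    norm_num [mul_comm]
  have h3 : u ^ 3 ≤ (T ^ η) ^ 3 := pow_le_pow_left₀ hu huT 3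
  have h2 : u ^ 2 ≤ (T ^ η) ^ 2 := pow_le_pow_left₀ hu huT 2
  have h23 : (T ^ η) ^ 2 ≤ (T ^ η) ^ 3 := pow_le_pow_right₀ hP1 (by norm_num)
  have h13 : T ^ η ≤ (T ^ η) ^ 3 := le_self_pow₀ hP1 (by norm_num)
  have hkey : u ^ 3 + 4 * u ^ 2 + 2 * u ≤ 7 * T ^ (3 * η) := by
    rw [← hcube]; nlinarith [huT.trans h13]
  have hukey : u ≤ 7 * T ^ (3 * η) := by
    rw [← hcube]
    have h0 : (0:ℝ) ≤ (T ^ η) ^ 3 := by positivity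
    linarith [huT.trans h13]
  have hTpow : (7:ℝ) * T ^ (-1 + 3 * η) = 7 * T ^ (3 * η) / T := by
    rw [Real.rpow_add hT0, Real.rpow_neg hT0.le, Real.rpow_one]
    ring
  have hRnn : (0:ℝ) ≤ 7 * T ^ (-1 + 3 * η) := by
    have := Real.rpow_nonneg hT0.le (-1 + 3 * η); linarith
  -- bound the two nonzero entries
  have htt1 : |t * t - 1| ≤ u / T := by
    rw [htt]
    have hinv1 : r⁻¹ ≤ 1 := inv_le_one_of_one_le₀ hr1
    rw [abs_of_nonpos (by linarith)]
    have hrr : 1 - r⁻¹ ≤ r - 1 := by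
      have h1 : 1 - r⁻¹ = (r - 1) / r := by field_simp
      rw [h1]; exact div_le_self (by linarith) hr1
    have : r - 1 = u / T := by rw [hrdef]; ring
    linarith
  have hXb : |X| ≤ u ^ 2 + 4 * u + 2 := by
    have q1 : u * d ≤ u * 2 := mul_le_mul_of_nonneg_left (by linarith [hd.2]) hu
    have q2 : u * 0 ≤ u * d := mul_le_mul_of_nonneg_left (by linarith [hd.1]) hu
    have q3 : u * a ≤ u * 2 := mul_le_mul_of_nonneg_left (by linarith [ha.2]) hu
    have q4 : u * 0 ≤ u * a := mul_le_mul_of_nonneg_left (by linarith [ha.1]) hu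
    have q5 : u ^ 2 * c ≤ u ^ 2 * 1 := mul_le_mul_of_nonneg_left hc.2 (sq_nonneg u)
    have q6 : u ^ 2 * (-1) ≤ u ^ 2 * c := mul_le_mul_of_nonneg_left hc.1 (sq_nonneg u)
    rw [hX, abs_le]
    constructor <;> linarith [hb.1, hb.2]
  have hE1 : |(t * t - 1) * X| ≤ 7 * T ^ (-1 + 3 * η) := by
    calc |(t * t - 1) * X| = |t * t - 1| * |X| := abs_mul _ _
      _ ≤ (u / T) * (u ^ 2 + 4 * u + 2) := by
          apply mul_le_mul htt1 hXb (abs_nonneg _) (div_nonneg hu hT0.le)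
      _ = (u ^ 3 + 4 * u ^ 2 + 2 * u) / T := by ring
      _ ≤ 7 * T ^ (3 * η) / T := (div_le_div_iff_of_pos_right hT0).mpr hkey
      _ = 7 * T ^ (-1 + 3 * η) := hTpow.symm
  have hE2 : |(s * s - 1) * c| ≤ 7 * T ^ (-1 + 3 * η) := by
    have hss1 : s * s - 1 = u / T := by rw [hss, hrdef]; ring
    calc |(s * s - 1) * c| = |s * s - 1| * |c| := abs_mul _ _
      _ ≤ (u / T) * 1 := by
          rw [hss1, abs_of_nonneg (div_nonneg hu hT0.le)]
          exact mul_le_mul_of_nonneg_left hc1 (div_nonneg hu hT0.le)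
      _ = u / T := by ring
      _ ≤ 7 * T ^ (3 * η) / T := (div_le_div_iff_of_pos_right hT0).mpr hukey
      _ = 7 * T ^ (-1 + 3 * η) := hTpow.symm
  rw [hD, mnorm_fin, abs_zero]
  exact max_le (max_le hRnn hE1) (max_le hE2 hRnn)
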